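/- Let f : ℝ^{d×r} → ℝ be twice continuously differentiable, γ ∈ ℝ, and define the merit function 𝓛(x) = f(x) − ½⟨sym(xᵀ∇f(x)), xᵀx − I_r⟩ + (γ/4)‖xᵀx − I_r‖²_F. Then for every x ∈ St(d,r), 𝓛 is differentiable at x and its Euclidean gradient equals ∇𝓛(x) = ∇f(x) − x·sym(xᵀ∇f(x)). -/

import Mathlib

open Matrix

attribute [local instance] Matrix.frobeniusNormedAddCommGroup Matrix.frobeniusNormedSpace

/-- Frobenius inner product `⟨A, B⟩ = Tr(A Bᵀ)`. -/
noncomputable def finner {m n : Type*} [Fintype m] [Fintype n]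
    (A B : Matrix m n ℝ) : ℝ := (A * Bᵀ).trace

/-- Symmetric part of a square matrix: `sym(A) = (A + Aᵀ)/2`. -/
noncomputable def msym {m : Type*} (A : Matrix m m ℝ) : Matrix m m ℝ :=
  ((1 : ℝ) / 2) • (A + Aᵀ)

/-!
Write `𝓛 = f - ½⟨S, K⟩ + (γ/4)⟨K, K⟩` with `K y = yᵀy - I` and `S y = sym(yᵀ∇f(y))`.
Since `K` vanishes on the Stiefel manifold, the product rule leaves only the terms in which `K` is
differentiated: the penalty contributes nothing, and the constraint term contributes
`⟨S x, xᵀv + vᵀx⟩ = 2⟨x S x, v⟩` because `S x` is symmetric. That `f` is `C²` is what makes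
`∇f`, hence `S`, differentiable.
-/

theorem ContinuousLinearMap.hasFDerivAt_of_bilinear_of_eq_zero {𝕜 E F G X : Type*}
    [NontriviallyNormedField 𝕜]
    [NormedAddCommGroup E] [NormedSpace 𝕜 E] [NormedAddCommGroup F] [NormedSpace 𝕜 F]
    [NormedAddCommGroup G] [NormedSpace 𝕜 G] [NormedAddCommGroup X] [NormedSpace 𝕜 X]
    (B : E →L[𝕜] F →L[𝕜] G) {S : X → E} {K : X → F} {K' : X →L[𝕜] F} {x : X}
    (hS : DifferentiableAt 𝕜 S x) (hK : HasFDerivAt K K' x) (hK0 : K x = 0) :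
    HasFDerivAt (fun y => B (S y) (K y)) ((B (S x)).comp K') x := by
  convert B.hasFDerivAt_of_bilinear hS.hasFDerivAt hK using 1
  ext v
  simp [hK0]

lemma transpose_msym {n : Type*} (A : Matrix n n ℝ) : (msym A)ᵀ = msym A := by
  simp [msym, add_comm]

section Frobenius

variable {l m n : Type*} [Fintype l] [Fintype m] [Fintype n]

noncomputable def Matrix.transposeL : Matrix m n ℝ →L[ℝ] Matrix n m ℝ :=
  LinearMap.toContinuousLinearMap (transposeLinearEquiv m n ℝ ℝ).toLinearMap

noncomputable def Matrix.mulL : Matrix l m ℝ →L[ℝ] Matrix m n ℝ →L[ℝ] Matrix l n ℝ :=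
  (mulLinearMap ℝ).toContinuousBilinearMap

noncomputable def finnerL : Matrix m n ℝ →L[ℝ] Matrix m n ℝ →L[ℝ] ℝ :=
  ((mulLinearMap ℝ).compl₂ (transposeLinearEquiv m n ℝ ℝ).toLinearMap
    |>.compr₂ (traceLinearMap m ℝ ℝ)).toContinuousBilinearMap

@[simp] lemma finnerL_apply (A B : Matrix m n ℝ) : finnerL A B = finner A B := rfl

lemma finner_sub_left (A B C : Matrix m n ℝ) : finner (A - B) C = finner A C - finner B C := by
  simp [finner, Matrix.sub_mul]

lemma frobenius_norm_sq_eq_finner (A : Matrix m n ℝ) : ‖A‖ ^ 2 = finner A A := by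
  rw [frobenius_norm_def, ← Real.sqrt_eq_rpow, Real.sq_sqrt (by positivity)]
  simp [finner, trace, mul_apply, sq]

lemma finner_single_one [DecidableEq m] [DecidableEq n] (A : Matrix m n ℝ) (i : m) (j : n) :
    finner A (single i j 1) = A i j := by
  simp [finner, trace, mul_apply, single, ite_and]

lemma eq_sum_finner_single [DecidableEq m] [DecidableEq n] (A : Matrix m n ℝ) :
    A = ∑ i, ∑ j, finner A (single i j 1) • single i j 1 := by
  conv_lhs => rw [matrix_eq_sum_single A]
  simp only [finner_single_one, smul_single, smul_eq_mul, mul_one]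

lemma finner_transpose_mul_add_transpose_mul {S : Matrix n n ℝ} (hS : Sᵀ = S)
    (x v : Matrix m n ℝ) : finner S (xᵀ * v + vᵀ * x) = 2 * finner (x * S) v := by
  have h₁ : finner S (xᵀ * v) = finner (x * S) v := by
    simp only [finner, transpose_mul, transpose_transpose]
    rw [← Matrix.mul_assoc, trace_mul_comm, ← Matrix.mul_assoc]
  have h₂ : finner S (vᵀ * x) = finner (x * S) v := by
    rw [← h₁, finner, finner, ← trace_transpose]
    simp only [transpose_mul, transpose_transpose, hS]
    rw [← Matrix.mul_assoc, trace_mul_comm, Matrix.mul_assoc]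
  simp only [finner, transpose_add, Matrix.mul_add, trace_add] at h₁ h₂ ⊢
  rw [h₁, h₂]
  ring

noncomputable def gramDeriv (x : Matrix m n ℝ) : Matrix m n ℝ →L[ℝ] Matrix n n ℝ :=
  LinearMap.toContinuousLinearMap
    { toFun := fun v => xᵀ * v + vᵀ * x
      map_add' := fun v w => by simp only [Matrix.mul_add, transpose_add, Matrix.add_mul]; abel
      map_smul' := fun c v => by simp [smul_add] }

@[simp] lemma gramDeriv_apply (x v : Matrix m n ℝ) : gramDeriv x v = xᵀ * v + vᵀ * x := rfl

theorem hasFDerivAt_transpose_mul_self (x : Matrix m n ℝ) :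
    HasFDerivAt (fun y : Matrix m n ℝ => yᵀ * y) (gramDeriv x) x :=
  (mulL.hasFDerivAt_of_bilinear transposeL.hasFDerivAt (hasFDerivAt_id x)).congr_fderiv rfl

theorem DifferentiableAt.msym_transpose_mul {g : Matrix m n ℝ → Matrix m n ℝ} {x : Matrix m n ℝ}
    (hg : DifferentiableAt ℝ g x) : DifferentiableAt ℝ (fun y => msym (yᵀ * g y)) x := by
  have hmul : DifferentiableAt ℝ (fun y => yᵀ * g y) x :=
    (mulL.hasFDerivAt_of_bilinear transposeL.hasFDerivAt hg.hasFDerivAt).differentiableAt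
  exact (hmul.add (transposeL.differentiableAt.comp x hmul)).const_smul (1 / 2 : ℝ)

theorem differentiableAt_of_fderiv_eq_finner [DecidableEq m] [DecidableEq n]
    {f : Matrix m n ℝ → ℝ} {g : Matrix m n ℝ → Matrix m n ℝ} {x : Matrix m n ℝ}
    (hf : DifferentiableAt ℝ (fderiv ℝ f) x) (hg : ∀ y v, fderiv ℝ f y v = finner (g y) v) :
    DifferentiableAt ℝ g x := by
  have hsum : g = fun y => ∑ i, ∑ j, fderiv ℝ f y (single i j 1) • single i j 1 := by
    funext y
    simp only [hg]
    exact eq_sum_finner_single (g y)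
  rw [hsum]
  fun_prop

end Frobenius

/-- For `f` twice continuously differentiable and the merit function
`𝓛(x) = f(x) - ½⟨sym(xᵀ∇f(x)), xᵀx - I_r⟩ + (γ/4)‖xᵀx - I_r‖²_F`, at every point `x` of the
Stiefel manifold, `𝓛` is differentiable and its Euclidean gradient is
`∇𝓛(x) = ∇f(x) - x · sym(xᵀ∇f(x))`. -/
theorem merit_gradient_on_Stiefel (d r : ℕ) (γ : ℝ)
    (f : Matrix (Fin d) (Fin r) ℝ → ℝ)
    (gradf : Matrix (Fin d) (Fin r) ℝ → Matrix (Fin d) (Fin r) ℝ)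
    (hf : ContDiff ℝ 2 f)
    (hgrad : ∀ x v : Matrix (Fin d) (Fin r) ℝ, fderiv ℝ f x v = finner (gradf x) v)
    (𝓛 : Matrix (Fin d) (Fin r) ℝ → ℝ)
    (h𝓛 : ∀ y, 𝓛 y = f y - (1 / 2 : ℝ) * finner (msym (yᵀ * gradf y)) (yᵀ * y - 1)
      + (γ / 4) * ‖yᵀ * y - 1‖ ^ 2)
    (x : Matrix (Fin d) (Fin r) ℝ) (hx : xᵀ * x = 1) :
    DifferentiableAt ℝ 𝓛 x ∧
    ∀ v : Matrix (Fin d) (Fin r) ℝ,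
      fderiv ℝ 𝓛 x v = finner (gradf x - x * msym (xᵀ * gradf x)) v := by
  have hgradf : DifferentiableAt ℝ gradf x :=
    differentiableAt_of_fderiv_eq_finner
      ((hf.fderiv_right (m := 1) le_rfl).differentiable one_ne_zero x) hgrad
  have hK := (hasFDerivAt_transpose_mul_self x).sub_const 1
  have hK0 : xᵀ * x - 1 = 0 := sub_eq_zero.2 hx
  have hconstraint := finnerL.hasFDerivAt_of_bilinear_of_eq_zero hgradf.msym_transpose_mul hK hK0
  have hpenalty := finnerL.hasFDerivAt_of_bilinear_of_eq_zero hK.differentiableAt hK hK0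
  have hL : HasFDerivAt 𝓛 (fderiv ℝ f x
      - (1 / 2 : ℝ) • (finnerL (msym (xᵀ * gradf x))).comp (gramDeriv x)
      + (γ / 4) • (finnerL (xᵀ * x - 1)).comp (gramDeriv x)) x := by
    simp only [funext h𝓛, frobenius_norm_sq_eq_finner]
    exact (((hf.differentiable two_ne_zero x).hasFDerivAt).sub
      (hconstraint.const_mul _)).add (hpenalty.const_mul _)
  refine ⟨hL.differentiableAt, fun v => ?_⟩
  simp [hL.fderiv, hK0, hgrad, finner_sub_left,
    finner_transpose_mul_add_transpose_mul (transpose_msym _)]
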